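/- arXiv:2403.17563 — 3 statements merged into one kernel-verified Lean document; each statement's English description precedes it below -/
import Mathlib

section
/- Let β₁, β₂ > 0 be real numbers satisfying 2β₁ − β₂ ≥ 2√2·(e − 1). Let p be analytic on the open unit disk 𝔻 with p(0) = 1, and suppose that for every z ∈ 𝔻 the value 1 + β₁·z·p′(z) + β₂·z²·p″(z) lies in the set {w ∈ ℂ : w ≠ 0, |log w| < 1} (principal branch of the complex logarithm). Then for every z ∈ 𝔻, p(z) ∈ {1 + log(w + (1 + w²)^{1/2}) : w ∈ 𝔻}, i.e. p(z) ≺ 1 + sinh⁻¹ z. -/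
/-!
Put `k t = β₁ p'(t) + β₂ t p''(t)`. By hypothesis `1 + t k(t) = exp L` with `‖L‖ < 1`, so
`‖t k(t)‖ ≤ e - 1` on the disc and Schwarz's lemma gives `‖k‖ ≤ e - 1`. Along the curve
`σ ↦ σ ^ (β₂ / β₁) z` the function `σ ↦ σ p'(σ ^ (β₂ / β₁) z)` has derivative `k / β₁`, so
`‖p'‖ ≤ (e - 1) / β₁` and `‖p z - 1‖ < (e - 1) / β₁ < 3 / 4` because `β₁ > √2 (e - 1)`.
Finally every `u` with `‖u‖ < arsinh 1` (which exceeds `3 / 4`) equals `log (w + √(1 + w²))` for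
`w = sinh u` in the disc: `√(1 + sinh² u) = cosh u` as `Re (cosh u) > 0` for `|Im u| < π / 2`.
-/

open Metric Set

namespace Complex

theorem norm_sinh_le_sinh_norm (u : ℂ) : ‖sinh u‖ ≤ Real.sinh ‖u‖ :=
  (hasSum_sinh u).norm_le_of_bounded (Real.hasSum_sinh ‖u‖) fun n => by
    rw [norm_div, norm_pow, norm_natCast]

theorem cosh_re_pos {u : ℂ} (hu : |u.im| < Real.pi / 2) : 0 < (cosh u).re := by
  have hcos : 0 < Real.cos u.im :=
    Real.cos_pos_of_mem_Ioo ⟨by linarith [neg_abs_le u.im], by linarith [le_abs_self u.im]⟩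
  rw [cosh, div_ofNat_re, add_re, exp_re, exp_re, neg_im, Real.cos_neg]
  positivity

theorem exists_mem_ball_eq_log_add_sqrt {u : ℂ} (hu : ‖u‖ < Real.arsinh 1) :
    ∃ w ∈ ball (0 : ℂ) 1, u = log (w + (1 + w ^ 2) ^ ((1 : ℂ) / 2)) := by
  have hu_im : |u.im| < Real.pi / 2 := by
    have : Real.arsinh 1 ≤ 1 := by
      simpa [Real.sinh_arsinh] using
        Real.self_le_sinh_iff.mpr (Real.arsinh_nonneg_iff.mpr zero_le_one)
    linarith [abs_im_le_norm u, Real.pi_gt_three]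
  refine ⟨sinh u, ?_, ?_⟩
  · rw [mem_ball_zero_iff]
    calc ‖sinh u‖ ≤ Real.sinh ‖u‖ := norm_sinh_le_sinh_norm u
      _ < Real.sinh (Real.arsinh 1) := Real.sinh_lt_sinh.mpr hu
      _ = 1 := Real.sinh_arsinh 1
  · have hsqrt : (1 + sinh u ^ 2) ^ ((1 : ℂ) / 2) = cosh u := by
      rw [add_comm, ← cosh_sq, one_div, sq_cpow_two_inv (cosh_re_pos hu_im)]
    rw [hsqrt, sinh_add_cosh, log_exp] <;> linarith [abs_lt.mp hu_im, Real.pi_pos]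

theorem norm_le_div_of_mapsTo_ball_sub_mul {k : ℂ → ℂ} {c : ℂ} {R₁ R₂ : ℝ}
    (hk : DifferentiableOn ℂ k (ball c R₁))
    (hmaps : MapsTo (fun t => (t - c) * k t) (ball c R₁) (closedBall 0 R₂)) {z : ℂ}
    (hz : z ∈ ball c R₁) : ‖k z‖ ≤ R₂ / R₁ := by
  set f : ℂ → ℂ := fun t => (t - c) * k t
  have hdslope : dslope f c z = k z := by
    rcases eq_or_ne z c with rfl | hne
    · have hf : HasDerivAt f (1 * k z + (z - z) * deriv k z) z :=
        ((hasDerivAt_id z).sub_const z).mul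
          (hk.differentiableAt (isOpen_ball.mem_nhds hz)).hasDerivAt
      rw [dslope_same, hf.deriv]
      ring
    · exact dslope_sub_smul_of_ne k hne
  rw [← hdslope]
  exact norm_dslope_le_div_of_mapsTo_ball ((differentiableOn_id.sub_const c).mul hk)
    (by simpa [f] using hmaps) hz

theorem norm_le_exp_sub_one_of_norm_log_le {k : ℂ → ℂ} {r : ℝ}
    (hk : DifferentiableOn ℂ k (ball 0 1))
    (hlog : ∀ t ∈ ball (0 : ℂ) 1, 1 + t * k t ≠ 0 ∧ ‖log (1 + t * k t)‖ ≤ r) {z : ℂ}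
    (hz : z ∈ ball 0 1) : ‖k z‖ ≤ Real.exp r - 1 := by
  refine (norm_le_div_of_mapsTo_ball_sub_mul hk (fun t ht => ?_) hz).trans_eq (div_one _)
  obtain ⟨hne, hle⟩ := hlog t ht
  have hexp : (t - 0) * k t = exp (log (1 + t * k t)) - 1 := by
    rw [exp_log hne]
    ring
  rw [mem_closedBall_zero_iff]
  calc _ = ‖exp (log (1 + t * k t)) - 1‖ := congrArg norm hexp
    _ ≤ Real.exp ‖log (1 + t * k t)‖ - 1 := by
      simpa using norm_exp_sub_sum_le_exp_norm_sub_sum (log (1 + t * k t)) 1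
    _ ≤ Real.exp r - 1 := by gcongr

end Complex

theorem Real.three_div_four_lt_arsinh_one : (3 / 4 : ℝ) < arsinh 1 := by
  have hexp : exp (3 / 4) < 9 / 4 := by
    have h4 : exp (3 / 4) ^ 4 = exp 1 ^ 3 := by
      rw [← exp_nat_mul, ← exp_nat_mul]
      norm_num
    refine lt_of_pow_lt_pow_left₀ 4 (by norm_num) ?_
    calc exp (3 / 4) ^ 4 = exp 1 ^ 3 := h4
      _ < 2.7182818286 ^ 3 := by gcongr; exact exp_one_lt_d9
      _ < (9 / 4) ^ 4 := by norm_num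
  have hsqrt : (5 / 4 : ℝ) < √(1 + 1 ^ 2) := by
    rw [lt_sqrt (by norm_num)]
    norm_num
  rw [arsinh, lt_log_iff_exp_lt (by positivity)]
  linarith

theorem Real.exp_one_sub_one_div_lt_arsinh_one {β : ℝ} (hβ : √2 * (exp 1 - 1) < β) :
    (exp 1 - 1) / β < arsinh 1 := by
  have he : 0 < exp 1 - 1 := by linarith [add_one_lt_exp one_ne_zero]
  have hsqrt : (4 / 3 : ℝ) < √2 := by
    rw [lt_sqrt (by norm_num)]
    norm_num
  calc (exp 1 - 1) / β < 3 / 4 := by rw [div_lt_iff₀ (by nlinarith)]; nlinarith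
    _ < arsinh 1 := three_div_four_lt_arsinh_one

theorem norm_deriv_le_of_norm_add_mul_deriv_deriv_le {p : ℂ → ℂ} {R a b C : ℝ}
    (hp : AnalyticOnNhd ℂ p (ball 0 R)) (ha : 0 < a) (hb : 0 ≤ b)
    (hC : ∀ t ∈ ball (0 : ℂ) R, ‖(a : ℂ) * deriv p t + (b : ℂ) * t * deriv (deriv p) t‖ ≤ C)
    {z : ℂ} (hz : z ∈ ball 0 R) : ‖deriv p z‖ ≤ C / a := by
  set γ := b / a
  set t : ℝ → ℂ := fun σ => ((σ ^ γ : ℝ) : ℂ) * z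
  set Φ : ℝ → ℂ := fun σ => (σ : ℂ) * deriv p (t σ)
  set Φ' : ℝ → ℂ := fun σ =>
    ((a : ℂ) * deriv p (t σ) + (b : ℂ) * t σ * deriv (deriv p) (t σ)) / a
  have ht_cont : Continuous t :=
    (Complex.continuous_ofReal.comp (Real.continuous_rpow_const (by positivity))).mul
      continuous_const
  have ht_mem : MapsTo t (Icc 0 1) (ball 0 R) := fun σ hσ => by
    rw [mem_ball_zero_iff] at hz ⊢
    calc ‖t σ‖ = σ ^ γ * ‖z‖ := by
          rw [norm_mul, Complex.norm_real, Real.norm_of_nonneg (Real.rpow_nonneg hσ.1 γ)]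
      _ ≤ 1 * ‖z‖ := by gcongr; exact Real.rpow_le_one hσ.1 hσ.2 (by positivity)
      _ < R := by rwa [one_mul]
  have hΦ : ∀ σ ∈ Ioo (0 : ℝ) 1, HasDerivAt Φ (Φ' σ) σ := by
    intro σ hσ
    have ht : HasDerivAt t (((γ * σ ^ (γ - 1) : ℝ) : ℂ) * z) σ :=
      (Real.hasDerivAt_rpow_const (Or.inl hσ.1.ne')).ofReal_comp.mul_const z
    have hp'' : HasDerivAt (deriv p) (deriv (deriv p) (t σ)) (t σ) :=
      (hp.deriv _ (ht_mem (Ioo_subset_Icc_self hσ))).differentiableAt.hasDerivAt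
    have hid : HasDerivAt (fun σ : ℝ => (σ : ℂ)) 1 σ := Complex.ofRealCLM.hasDerivAt
    refine (hid.mul (hp''.comp σ ht)).congr_deriv ?_
    have hσγ : σ ^ (γ - 1) = σ ^ γ / σ := Real.rpow_sub_one hσ.1.ne' γ
    have hσ0 : (σ : ℂ) ≠ 0 := Complex.ofReal_ne_zero.mpr hσ.1.ne'
    have ha0 : (a : ℂ) ≠ 0 := Complex.ofReal_ne_zero.mpr ha.ne'
    simp only [Φ', t, hσγ, γ, Function.comp_apply]
    push_cast
    field_simp
  have hp'_cont := hp.deriv.continuousOn.comp ht_cont.continuousOn ht_mem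
  have hp''_cont := hp.deriv.deriv.continuousOn.comp ht_cont.continuousOn ht_mem
  have hΦ'_cont : ContinuousOn Φ' (Icc 0 1) :=
    ((continuousOn_const.mul hp'_cont).add
      ((continuousOn_const.mul ht_cont.continuousOn).mul hp''_cont)).div_const _
  have hFTC : ∫ σ in (0 : ℝ)..1, Φ' σ = deriv p z := by
    rw [intervalIntegral.integral_eq_sub_of_hasDerivAt_of_le zero_le_one
      (Complex.continuous_ofReal.continuousOn.mul hp'_cont) hΦ
      (hΦ'_cont.intervalIntegrable_of_Icc zero_le_one)]
    simp [t]
  have hbound : ∀ σ ∈ uIoc (0 : ℝ) 1, ‖Φ' σ‖ ≤ C / a := by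
    intro σ hσ
    rw [uIoc_of_le zero_le_one] at hσ
    simp only [Φ', norm_div, Complex.norm_real, Real.norm_of_nonneg ha.le]
    gcongr
    exact hC _ (ht_mem (Ioc_subset_Icc_self hσ))
  rw [← hFTC]
  simpa using intervalIntegral.norm_integral_le_of_norm_le_const hbound

theorem stmt14_general (β₁ β₂ : ℝ) (hβ₂ : 0 < β₂)
    (hcond : (2 * β₁ - β₂) ≥ 2 * Real.sqrt 2 * (Real.exp 1 - 1))
    (p : ℂ → ℂ) (hp : AnalyticOnNhd ℂ p (ball 0 1)) (hp0 : p 0 = 1)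
    (hsub : ∀ z ∈ ball (0 : ℂ) 1,
      (1 + (β₁ : ℂ) * z * deriv p z + (β₂ : ℂ) * z ^ 2 * deriv (deriv p) z) ≠ 0 ∧ ‖Complex.log (1 + (β₁ : ℂ) * z * deriv p z + (β₂ : ℂ) * z ^ 2 * deriv (deriv p) z)‖ < 1) :
    ∀ z ∈ ball (0 : ℂ) 1, ∃ w ∈ ball (0 : ℂ) 1, p z = 1 + Complex.log (w + (1 + w ^ 2) ^ ((1 : ℂ) / 2)) := by
  intro z hz
  set k : ℂ → ℂ := fun t => (β₁ : ℂ) * deriv p t + (β₂ : ℂ) * t * deriv (deriv p) t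
  have hk : ∀ t ∈ ball (0 : ℂ) 1, ‖k t‖ ≤ Real.exp 1 - 1 := by
    refine fun t ht => Complex.norm_le_exp_sub_one_of_norm_log_le ?_ (fun s hs => ?_) ht
    · exact ((analyticOnNhd_const.mul hp.deriv).add
        ((analyticOnNhd_const.mul analyticOnNhd_id).mul hp.deriv.deriv)).differentiableOn
    have hs_eq : 1 + s * k s =
        1 + (β₁ : ℂ) * s * deriv p s + (β₂ : ℂ) * s ^ 2 * deriv (deriv p) s := by
      ring
    rw [hs_eq]
    exact ⟨(hsub s hs).1, (hsub s hs).2.le⟩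
  have hβ₁ : √2 * (Real.exp 1 - 1) < β₁ := by linarith
  have he : 0 < Real.exp 1 - 1 := by linarith [Real.add_one_lt_exp one_ne_zero]
  have hβ₁_pos : 0 < β₁ := lt_of_le_of_lt (by positivity) hβ₁
  have hu : ‖p z - 1‖ < Real.arsinh 1 :=
    calc ‖p z - 1‖ = ‖p z - p 0‖ := by rw [hp0]
      _ ≤ (Real.exp 1 - 1) / β₁ * ‖z - 0‖ :=
        (convex_ball (0 : ℂ) 1).norm_image_sub_le_of_norm_deriv_le
          (fun t ht => (hp t ht).differentiableAt)
          (fun t ht => norm_deriv_le_of_norm_add_mul_deriv_deriv_le hp hβ₁_pos hβ₂.le hk ht)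
          (mem_ball_self one_pos) hz
      _ ≤ (Real.exp 1 - 1) / β₁ := by
        rw [sub_zero]
        exact mul_le_of_le_one_right (by positivity) (mem_ball_zero_iff.mp hz).le
      _ < Real.arsinh 1 := Real.exp_one_sub_one_div_lt_arsinh_one hβ₁
  obtain ⟨w, hw, hpw⟩ := Complex.exists_mem_ball_eq_log_add_sqrt hu
  exact ⟨w, hw, by rw [← hpw]; ring⟩

theorem stmt14 (β₁ β₂ : ℝ) (hβ₁ : 0 < β₁) (hβ₂ : 0 < β₂)
    (hcond : (2 * β₁ - β₂) ≥ 2 * Real.sqrt 2 * (Real.exp 1 - 1))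
    (p : ℂ → ℂ) (hp : AnalyticOnNhd ℂ p (ball 0 1)) (hp0 : p 0 = 1)
    (hsub : ∀ z ∈ ball (0 : ℂ) 1,
      (1 + (β₁ : ℂ) * z * deriv p z + (β₂ : ℂ) * z ^ 2 * deriv (deriv p) z) ≠ 0 ∧ ‖Complex.log (1 + (β₁ : ℂ) * z * deriv p z + (β₂ : ℂ) * z ^ 2 * deriv (deriv p) z)‖ < 1) :
    ∀ z ∈ ball (0 : ℂ) 1, ∃ w ∈ ball (0 : ℂ) 1, p z = 1 + Complex.log (w + (1 + w ^ 2) ^ ((1 : ℂ) / 2)) :=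
  stmt14_general β₁ β₂ hβ₂ hcond p hp hp0 hsub
end

section
/- Let β₁, β₂ > 0 be real numbers satisfying 2β₁ − β₂ ≥ 4. Let f be analytic on the open unit disk 𝔻 with f(0) = 0, f′(0) = 1, and f(z) ≠ 0 for all z ∈ 𝔻 \ {0}. Define, for z ∈ 𝔻 \ {0}, S₁(z) = z f′(z)/f(z), S₂(z) = z² f″(z)/f(z), S₃(z) = z³ f‴(z)/f(z), and S_f(z) = 1 + β₁(S₂ − S₁² + S₁) + β₂(S₃ + 2S₂ + 2S₁³ − 2S₁² − 3S₁S₂). If S_f(z) ∈ {w ∈ ℂ : |w² − 1| < 2|w|} for every z ∈ 𝔻 \ {0}, then z f′(z)/f(z) ∈ {1 + log(w + (1 + w²)^{1/2}) : w ∈ 𝔻} for every z ∈ 𝔻 \ {0}; that is, f belongs to the class 𝒮*_ρ of starlike functions associated with the petal-shaped domain. -/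
/-!
Put `p(z) = z f'(z) / f(z)`, analytic on the disk with `p(0) = 1`. Then
`S_f = 1 + β₁ z p' + β₂ z² p''` is an analytic function `G` with `G(0) = 1` taking values in the
lune. The component of the lune containing `1` is `{ω + √(1 + ω²) : |ω| < 1}` (right half-plane
branch), so `ω = (G² - 1) / (2G)` is a Schwarz function and `|G(z) - 1| ≤ |z| + |z|²`. Solving
`β₁ q + β₂ z q' = (G - 1) / z` for `q = p'` with the integrating factor `t ^ (β₁ / β₂)` gives
`|p'(z)| ≤ 1 / β₁ + |z| / (β₁ + β₂)`; integrating along the radius,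
`|p(z) - 1| < 1 / β₁ + 1 / (2 (β₁ + β₂)) ≤ 3 / 4` because `2 β₁ - β₂ ≥ 4`. Finally
`sinh (3 / 4) < 1`, so `w = sinh (p(z) - 1)` lies in the disk and `p(z) = 1 + sinh⁻¹ w`.
-/

open Metric Set MeasureTheory

theorem Complex.norm_sinh_le_sinh_norm_s17 (u : ℂ) : ‖Complex.sinh u‖ ≤ Real.sinh ‖u‖ :=
  (u.hasSum_sinh.norm_le_of_bounded (Real.hasSum_sinh ‖u‖) fun n => by
    rw [norm_div, norm_pow, Complex.norm_natCast])

theorem Complex.re_cosh_pos {u : ℂ} (hu : |u.im| < Real.pi / 2) : 0 < (Complex.cosh u).re := by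
  have hcos : 0 < Real.cos u.im := Real.cos_pos_of_mem_Ioo (abs_lt.1 hu)
  have h2 : 2 * (Complex.cosh u).re
      = Real.exp u.re * Real.cos u.im + Real.exp (-u.re) * Real.cos u.im := by
    simpa [Complex.exp_re] using congrArg Complex.re (Complex.two_cosh u)
  nlinarith [Real.exp_pos u.re, Real.exp_pos (-u.re)]

theorem Complex.log_sinh_add_cpow_half {u : ℂ} (hu : |u.im| < Real.pi / 2) :
    Complex.log (Complex.sinh u + (1 + Complex.sinh u ^ 2) ^ ((1 : ℂ) / 2)) = u := by
  have hsq : 1 + Complex.sinh u ^ 2 = Complex.cosh u ^ 2 := by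
    linear_combination -Complex.cosh_sq_sub_sinh_sq u
  rw [hsq, one_div, Complex.sq_cpow_two_inv (Complex.re_cosh_pos hu), Complex.sinh_add_cosh,
    Complex.log_exp] <;>
  linarith [abs_lt.1 hu, Real.pi_pos]

-- `sinh x < 1` iff `exp x < 1 + √2 ≈ 2.414`
theorem Real.sinh_three_quarters_lt_one : Real.sinh (3 / 4) < 1 := by
  set a := Real.exp (3 / 4)
  have ha4 : a ^ 4 < 2.4 ^ 4 := by
    have : a ^ 4 = Real.exp 1 ^ 3 := by
      rw [← Real.exp_nat_mul, ← Real.exp_nat_mul]; norm_num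
    rw [this]
    calc Real.exp 1 ^ 3 < 3 ^ 3 := by gcongr; exact Real.exp_one_lt_three
      _ < 2.4 ^ 4 := by norm_num
  have ha : a < 2.4 := lt_of_pow_lt_pow_left₀ 4 (by norm_num) ha4
  have ha0 : 0 < a := Real.exp_pos _
  have hinv : a * a⁻¹ = 1 := mul_inv_cancel₀ ha0.ne'
  rw [Real.sinh_eq, Real.exp_neg]
  nlinarith [inv_pos.2 ha0]

theorem exists_mem_ball_log_add_cpow_eq {u : ℂ} (hu : Real.sinh ‖u‖ < 1) :
    ∃ w ∈ ball (0 : ℂ) 1, Complex.log (w + (1 + w ^ 2) ^ ((1 : ℂ) / 2)) = u := by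
  refine ⟨Complex.sinh u, mem_ball_zero_iff.2 ((Complex.norm_sinh_le_sinh_norm_s17 u).trans_lt hu),
    Complex.log_sinh_add_cpow_half ?_⟩
  calc |u.im| ≤ ‖u‖ := Complex.abs_im_le_norm u
    _ ≤ Real.sinh ‖u‖ := Real.self_le_sinh_iff.2 (norm_nonneg u)
    _ < 1 := hu
    _ < Real.pi / 2 := by linarith [Real.pi_gt_three]

theorem Complex.re_ne_zero_of_norm_sq_sub_one_lt {w : ℂ} (hw : ‖w ^ 2 - 1‖ < 2 * ‖w‖) :
    w.re ≠ 0 := by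
  intro h
  have hre : (w ^ 2 - 1).re = -(w.im ^ 2 + 1) := by
    simp only [sq, Complex.sub_re, Complex.mul_re, h, mul_zero, zero_sub, Complex.one_re]; ring
  have hnorm : ‖w‖ ^ 2 = w.im ^ 2 := by rw [Complex.sq_norm, Complex.normSq_apply, h]; ring
  have := Complex.abs_re_le_norm (w ^ 2 - 1)
  rw [hre, abs_neg, abs_of_pos (by positivity)] at this
  nlinarith [sq_nonneg (‖w‖ - 1)]

theorem IsPreconnected.pos_of_ne_zero {X : Type*} [TopologicalSpace X] {s : Set X}
    (hs : IsPreconnected s) {g : X → ℝ} (hg : ContinuousOn g s) (hne : ∀ x ∈ s, g x ≠ 0)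
    {x₀ : X} (hx₀ : x₀ ∈ s) (h₀ : 0 < g x₀) {x : X} (hx : x ∈ s) : 0 < g x := by
  by_contra! hle
  obtain ⟨y, hy, hy0⟩ := hs.intermediate_value hx hx₀ hg ⟨hle, h₀.le⟩
  exact hne y hy hy0

theorem Complex.norm_sub_one_le_of_re_pos {w : ℂ} (hw : 0 < w.re) :
    ‖w - 1‖ ≤ ‖(w ^ 2 - 1) / (2 * w)‖ + ‖(w ^ 2 - 1) / (2 * w)‖ ^ 2 := by
  have hw0 : w ≠ 0 := fun h => by simp [h] at hw
  set ω := (w ^ 2 - 1) / (2 * w)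
  set s := (w ^ 2 + 1) / (2 * w)
  -- `s = w - ω` is the branch of `√(1 + ω²)` in the right half-plane
  have hsω : w - 1 = ω + (s - 1) := by simp only [ω, s]; field_simp; ring
  have hs : (s - 1) * (s + 1) = ω ^ 2 := by simp only [ω, s]; field_simp; ring
  have hs_re : 0 < s.re := by
    have : s = (w + w⁻¹) / 2 := by simp only [s]; field_simp
    rw [this, Complex.div_ofNat_re, Complex.add_re, Complex.inv_re]
    have := Complex.normSq_pos.2 hw0
    positivity
  have hs1 : 1 ≤ ‖s + 1‖ := by
    calc (1 : ℝ) ≤ (s + 1).re := by rw [Complex.add_re, Complex.one_re]; linarith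
      _ ≤ ‖s + 1‖ := Complex.re_le_norm _
  have hs1' : ‖s - 1‖ ≤ ‖ω‖ ^ 2 := by
    calc ‖s - 1‖ ≤ ‖s - 1‖ * ‖s + 1‖ := le_mul_of_one_le_right (norm_nonneg _) hs1
      _ = ‖ω‖ ^ 2 := by rw [← norm_mul, hs, norm_pow]
  calc ‖w - 1‖ ≤ ‖ω‖ + ‖s - 1‖ := hsω ▸ norm_add_le _ _
    _ ≤ ‖ω‖ + ‖ω‖ ^ 2 := by gcongr

theorem norm_sub_one_le_of_norm_sq_sub_one_lt {G : ℂ → ℂ}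
    (hG : DifferentiableOn ℂ G (ball 0 1)) (hG0 : G 0 = 1)
    (hlune : ∀ z ∈ ball (0 : ℂ) 1, ‖G z ^ 2 - 1‖ < 2 * ‖G z‖)
    {z : ℂ} (hz : z ∈ ball (0 : ℂ) 1) : ‖G z - 1‖ ≤ ‖z‖ + ‖z‖ ^ 2 := by
  have hGne : ∀ z ∈ ball (0 : ℂ) 1, G z ≠ 0 := fun z hz h => by
    have := hlune z hz; norm_num [h] at this
  have hre : 0 < (G z).re :=
    (convex_ball (0 : ℂ) 1).isPreconnected.pos_of_ne_zero
      (Complex.continuous_re.comp_continuousOn hG.continuousOn)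
      (fun z hz => Complex.re_ne_zero_of_norm_sq_sub_one_lt (hlune z hz)) (mem_ball_self one_pos)
      (by simp [hG0]) hz
  set ω : ℂ → ℂ := fun z => (G z ^ 2 - 1) / (2 * G z)
  have hω : DifferentiableOn ℂ ω (ball 0 1) :=
    ((hG.pow 2).sub_const 1).div (hG.const_mul 2) fun z hz => mul_ne_zero two_ne_zero (hGne z hz)
  have hω_maps : Set.MapsTo ω (ball 0 1) (closedBall 0 1) := fun z hz => by
    rw [mem_closedBall_zero_iff, norm_div, norm_mul, Complex.norm_two]
    exact div_le_one_of_le₀ (hlune z hz).le (by positivity)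
  have hωz : ‖ω z‖ ≤ ‖z‖ :=
    Complex.norm_le_norm_of_mapsTo_ball hω hω_maps (by simp [ω, hG0]) (mem_ball_zero_iff.1 hz)
  calc ‖G z - 1‖ ≤ ‖ω z‖ + ‖ω z‖ ^ 2 := Complex.norm_sub_one_le_of_re_pos hre
    _ ≤ ‖z‖ + ‖z‖ ^ 2 := by gcongr

theorem ofReal_mul_mem_ball {R t : ℝ} {w : ℂ} (ht : t ∈ Icc (0 : ℝ) 1)
    (hw : w ∈ ball (0 : ℂ) R) : (t : ℂ) * w ∈ ball (0 : ℂ) R := by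
  rw [mem_ball_zero_iff, norm_mul, Complex.norm_real, Real.norm_of_nonneg ht.1]
  exact (mul_le_of_le_one_left (norm_nonneg w) ht.2).trans_lt (mem_ball_zero_iff.1 hw)

theorem norm_sub_le_integral_of_hasDerivAt {E : Type*} [NormedAddCommGroup E]
    [NormedSpace ℝ E] [CompleteSpace E] {φ φ' : ℝ → E} {B : ℝ → ℝ} {a b : ℝ} (hab : a ≤ b)
    (hφ : ContinuousOn φ (Icc a b)) (hderiv : ∀ t ∈ Ioo a b, HasDerivAt φ (φ' t) t)
    (hφ' : IntervalIntegrable φ' volume a b)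
    (hB : IntervalIntegrable B volume a b) (hle : ∀ t ∈ Ioc a b, ‖φ' t‖ ≤ B t) :
    ‖φ b - φ a‖ ≤ ∫ t in a..b, B t := by
  rw [← intervalIntegral.integral_eq_sub_of_hasDeriv_right_of_le hab hφ
    (fun t ht => (hderiv t ht).hasDerivWithinAt) hφ']
  exact intervalIntegral.norm_integral_le_of_norm_le hab (.of_forall hle) hB

theorem norm_sub_le_of_norm_deriv_le {R : ℝ} {P : ℂ → ℂ}
    (hP : DifferentiableOn ℂ P (ball 0 R)) {a b : ℝ}
    (hbound : ∀ z ∈ ball (0 : ℂ) R, z ≠ 0 → ‖deriv P z‖ ≤ a + b * ‖z‖)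
    {z : ℂ} (hz : z ∈ ball (0 : ℂ) R) (hz0 : z ≠ 0) :
    ‖P z - P 0‖ ≤ a * ‖z‖ + b / 2 * ‖z‖ ^ 2 := by
  have hmem : ∀ t ∈ Icc (0 : ℝ) 1, (t : ℂ) * z ∈ ball (0 : ℂ) R := fun t ht =>
    ofReal_mul_mem_ball ht hz
  have hline : ContinuousOn (fun t : ℝ => (t : ℂ) * z) (Icc 0 1) := by fun_prop
  have hP' : ContinuousOn (fun t : ℝ => deriv P (t * z) * z) (Icc 0 1) :=
    ((hP.deriv isOpen_ball).continuousOn.comp hline hmem).mul continuousOn_const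
  have hderiv : ∀ t ∈ Ioo (0 : ℝ) 1,
      HasDerivAt (fun t : ℝ => P (t * z)) (deriv P (t * z) * z) t := fun t ht =>
    ((hP.differentiableAt (isOpen_ball.mem_nhds (hmem t (Ioo_subset_Icc_self ht)))).hasDerivAt.comp
      (t : ℂ) (hasDerivAt_mul_const z)).comp_ofReal
  have hle : ∀ t ∈ Ioc (0 : ℝ) 1, ‖deriv P (t * z) * z‖ ≤ a * ‖z‖ + b * ‖z‖ ^ 2 * t :=
    fun t ht => by
      have := hbound _ (hmem t (Ioc_subset_Icc_self ht))
        (mul_ne_zero (by exact_mod_cast ht.1.ne') hz0)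
      rw [norm_mul, Complex.norm_real, Real.norm_of_nonneg ht.1.le] at this
      rw [norm_mul]
      nlinarith [norm_nonneg z]
  have hB : Continuous fun t : ℝ => b * ‖z‖ ^ 2 * t := by fun_prop
  have hint : ∫ t in (0 : ℝ)..1, (a * ‖z‖ + b * ‖z‖ ^ 2 * t) = a * ‖z‖ + b / 2 * ‖z‖ ^ 2 := by
    rw [intervalIntegral.integral_add intervalIntegrable_const (hB.intervalIntegrable 0 1),
      intervalIntegral.integral_const_mul (b * ‖z‖ ^ 2), integral_id,
      intervalIntegral.integral_const, smul_eq_mul]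
    ring
  simpa [hint] using norm_sub_le_integral_of_hasDerivAt zero_le_one
    (hP.continuousOn.comp hline hmem) hderiv (hP'.intervalIntegrable_of_Icc zero_le_one)
    (continuous_const.add hB |>.intervalIntegrable 0 1) hle

theorem hasDerivAt_rpow_smul_comp_ofReal_mul {β₁ β₂ t : ℝ} (hβ₂ : β₂ ≠ 0) (ht : 0 < t)
    {Q : ℂ → ℂ} {w : ℂ} (hQ : DifferentiableAt ℂ Q (t * w)) :
    HasDerivAt (fun t : ℝ => t ^ (β₁ / β₂) • Q (t * w))
      ((t ^ (β₁ / β₂ - 1) / β₂) • (β₁ * Q (t * w) + β₂ * (t * w) * deriv Q (t * w))) t := by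
  have hQt : HasDerivAt (fun s : ℝ => Q (s * w)) (deriv Q (t * w) * w) t :=
    (hQ.hasDerivAt.comp (t : ℂ) (hasDerivAt_mul_const w)).comp_ofReal
  refine ((Real.hasDerivAt_rpow_const (.inl ht.ne')).smul hQt).congr_deriv ?_
  have hpow : t ^ (β₁ / β₂) = t ^ (β₁ / β₂ - 1) * t := by
    rw [← Real.rpow_add_one ht.ne', sub_add_cancel]
  have hβ₂' : (β₂ : ℂ) ≠ 0 := by exact_mod_cast hβ₂
  simp only [hpow, Complex.real_smul]
  push_cast
  field_simp
  ring

theorem integral_rpow_sub_one_add_mul_rpow {κ : ℝ} (hκ : 0 < κ) (r : ℝ) :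
    ∫ t in (0 : ℝ)..1, (t ^ (κ - 1) + r * t ^ κ) = 1 / κ + r / (κ + 1) := by
  rw [intervalIntegral.integral_add (intervalIntegral.intervalIntegrable_rpow' (by linarith))
    ((intervalIntegral.intervalIntegrable_rpow' (by linarith)).const_mul r),
    intervalIntegral.integral_const_mul, integral_rpow (.inl (by linarith)),
    integral_rpow (.inl (by linarith)), sub_add_cancel, Real.one_rpow, Real.one_rpow,
    Real.zero_rpow hκ.ne', Real.zero_rpow (by linarith : κ + 1 ≠ 0)]
  ring

-- `t ^ (β₁ / β₂)` is an integrating factor for `β₁ Q + β₂ z Q'` along the segment `[0, w]`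
theorem norm_le_of_norm_mul_add_mul_deriv_le {β₁ β₂ R : ℝ} (hβ₁ : 0 < β₁) (hβ₂ : 0 < β₂)
    {Q : ℂ → ℂ} (hQ : DifferentiableOn ℂ Q (ball 0 R))
    (hbound : ∀ z ∈ ball (0 : ℂ) R,
      ‖β₁ * (z * Q z) + β₂ * (z ^ 2 * deriv Q z)‖ ≤ ‖z‖ + ‖z‖ ^ 2) :
    ∀ w ∈ ball (0 : ℂ) R, w ≠ 0 → ‖Q w‖ ≤ 1 / β₁ + 1 / (β₁ + β₂) * ‖w‖ := by
  intro w hw hw0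
  set κ := β₁ / β₂
  have hκ : 0 < κ := div_pos hβ₁ hβ₂
  set H : ℂ → ℂ := fun z => β₁ * Q z + β₂ * z * deriv Q z
  have hmem : ∀ t ∈ Icc (0 : ℝ) 1, (t : ℂ) * w ∈ ball (0 : ℂ) R := fun t ht =>
    ofReal_mul_mem_ball ht hw
  have hline : ContinuousOn (fun t : ℝ => (t : ℂ) * w) (Icc 0 1) := by fun_prop
  have hH : ContinuousOn (fun t : ℝ => H (t * w)) (Icc 0 1) :=
    (hQ.continuousOn.const_smul (β₁ : ℂ)).add
      ((continuousOn_id.const_smul (β₂ : ℂ)).mul (hQ.deriv isOpen_ball).continuousOn)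
      |>.comp hline hmem
  have hle : ∀ t ∈ Ioc (0 : ℝ) 1,
      ‖(t ^ (κ - 1) / β₂) • H (t * w)‖ ≤ (t ^ (κ - 1) + ‖w‖ * t ^ κ) / β₂ := fun t ht => by
    have ht0 : 0 < t := ht.1
    have hHt : ‖H (t * w)‖ ≤ 1 + t * ‖w‖ := by
      have := hbound _ (hmem t (Ioc_subset_Icc_self ht))
      rw [show β₁ * (t * w * Q (t * w)) + β₂ * ((t * w) ^ 2 * deriv Q (t * w))
          = t * w * H (t * w) by ring, norm_mul, norm_mul, Complex.norm_real,
        Real.norm_of_nonneg ht0.le] at this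
      exact le_of_mul_le_mul_left (by linarith) (mul_pos ht0 (norm_pos_iff.2 hw0))
    have hpow : t ^ κ = t ^ (κ - 1) * t := by rw [← Real.rpow_add_one ht0.ne', sub_add_cancel]
    rw [norm_smul, Real.norm_of_nonneg (by positivity), hpow]
    calc t ^ (κ - 1) / β₂ * ‖H (t * w)‖ ≤ t ^ (κ - 1) / β₂ * (1 + t * ‖w‖) := by gcongr
      _ = _ := by ring
  have key := norm_sub_le_integral_of_hasDerivAt (φ := fun t : ℝ => t ^ κ • Q (t * w))
    zero_le_one
    ((Real.continuous_rpow_const hκ.le).continuousOn.smul (hQ.continuousOn.comp hline hmem))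
    (fun t ht => hasDerivAt_rpow_smul_comp_ofReal_mul hβ₂.ne' ht.1
      (hQ.differentiableAt (isOpen_ball.mem_nhds (hmem t (Ioo_subset_Icc_self ht)))))
    (((intervalIntegral.intervalIntegrable_rpow' (by linarith)).div_const β₂).smul_continuousOn
      (by rw [uIcc_of_le zero_le_one]; exact hH))
    (((intervalIntegral.intervalIntegrable_rpow' (by linarith)).add
      ((intervalIntegral.intervalIntegrable_rpow' (by linarith)).const_mul _)).div_const β₂) hle
  rw [intervalIntegral.integral_div, integral_rpow_sub_one_add_mul_rpow hκ] at key
  simp only [Complex.ofReal_one, one_mul, Real.one_rpow, one_smul, Complex.ofReal_zero, zero_mul,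
    Real.zero_rpow hκ.ne', zero_smul, sub_zero] at key
  convert key using 1
  simp only [κ]
  field_simp

theorem exists_differentiableOn_mul_eq_mul_deriv {U : Set ℂ} (hU : IsOpen U) (h0 : 0 ∈ U)
    {f : ℂ → ℂ} (hf : DifferentiableOn ℂ f U) (hf0 : f 0 = 0) (hf'0 : deriv f 0 ≠ 0)
    (hfne : ∀ z ∈ U, z ≠ 0 → f z ≠ 0) :
    ∃ P : ℂ → ℂ, DifferentiableOn ℂ P U ∧ P 0 = 1 ∧
      EqOn (fun z => P z * f z) (fun z => z * deriv f z) U := by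
  have hh : DifferentiableOn ℂ (dslope f 0) U :=
    (Complex.differentiableOn_dslope (hU.mem_nhds h0)).2 hf
  have hfh : ∀ z, z * dslope f 0 z = f z := fun z => by
    simpa [hf0] using sub_smul_dslope f 0 z
  have hhne : ∀ z ∈ U, dslope f 0 z ≠ 0 := fun z hz => by
    rcases eq_or_ne z 0 with rfl | hz0
    · rwa [dslope_same]
    · intro h
      exact hfne z hz hz0 (by rw [← hfh, h, mul_zero])
  refine ⟨fun z => deriv f z / dslope f 0 z, (hf.deriv hU).div hh hhne, ?_, fun z hz => ?_⟩
  · simp [dslope_same, hf'0]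
  · dsimp only
    rw [← hfh z]
    field_simp [hhne z hz]

theorem eqOn_deriv_mul_add_mul_deriv {𝕜 : Type*} [NontriviallyNormedField 𝕜] {U : Set 𝕜}
    (hU : IsOpen U) {a b g : 𝕜 → 𝕜} (ha : DifferentiableOn 𝕜 a U) (hb : DifferentiableOn 𝕜 b U)
    (h : EqOn (fun z => a z * b z) g U) :
    EqOn (fun z => deriv a z * b z + a z * deriv b z) (deriv g) U := fun z hz => by
  rw [← h.deriv hU hz, deriv_fun_mul (ha.differentiableAt (hU.mem_nhds hz))
    (hb.differentiableAt (hU.mem_nhds hz))]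

theorem eqOn_deriv_mul_of_eqOn_mul_eq_mul_deriv {U : Set ℂ} (hU : IsOpen U) {P f : ℂ → ℂ}
    (hP : DifferentiableOn ℂ P U) (hf : DifferentiableOn ℂ f U)
    (hPf : EqOn (fun z => P z * f z) (fun z => z * deriv f z) U) :
    EqOn (fun z => deriv P z * f z)
      (fun z => deriv f z + z * deriv (deriv f) z - P z * deriv f z) U := fun z hz => by
  have hf' := hf.deriv hU
  have := eqOn_deriv_mul_add_mul_deriv hU hP hf hPf hz
  have hd : HasDerivAt (fun z => z * deriv f z) (1 * deriv f z + z * deriv (deriv f) z) z :=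
    (hasDerivAt_id' z).mul (hf'.differentiableAt (hU.mem_nhds hz)).hasDerivAt
  rw [hd.deriv] at this
  linear_combination this

theorem eqOn_deriv_deriv_mul_of_eqOn_mul_eq_mul_deriv {U : Set ℂ} (hU : IsOpen U) {P f : ℂ → ℂ}
    (hP : DifferentiableOn ℂ P U) (hf : DifferentiableOn ℂ f U)
    (hPf : EqOn (fun z => P z * f z) (fun z => z * deriv f z) U) :
    EqOn (fun z => deriv (deriv P) z * f z)
      (fun z => 2 * deriv (deriv f) z + z * deriv (deriv (deriv f)) z
        - 2 * deriv P z * deriv f z - P z * deriv (deriv f) z) U := fun z hz => by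
  have hf' := hf.deriv hU
  have hf'' := hf'.deriv hU
  have hd {g : ℂ → ℂ} (hg : DifferentiableOn ℂ g U) : DifferentiableAt ℂ g z :=
    hg.differentiableAt (hU.mem_nhds hz)
  have := eqOn_deriv_mul_add_mul_deriv hU (hP.deriv hU) hf
    (eqOn_deriv_mul_of_eqOn_mul_eq_mul_deriv hU hP hf hPf) hz
  have hderiv : HasDerivAt (fun z => deriv f z + z * deriv (deriv f) z - P z * deriv f z)
      (deriv (deriv f) z + (1 * deriv (deriv f) z + z * deriv (deriv (deriv f)) z)
        - (deriv P z * deriv f z + P z * deriv (deriv f) z)) z :=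
    ((hd hf').hasDerivAt.add ((hasDerivAt_id' z).mul (hd hf'').hasDerivAt)).sub
      ((hd hP).hasDerivAt.mul (hd hf').hasDerivAt)
  rw [hderiv.deriv] at this
  linear_combination this

theorem mul_deriv_eq_of_eqOn_mul_eq_mul_deriv {U : Set ℂ} (hU : IsOpen U) {P f : ℂ → ℂ}
    (hP : DifferentiableOn ℂ P U) (hf : DifferentiableOn ℂ f U)
    (hPf : EqOn (fun z => P z * f z) (fun z => z * deriv f z) U) {z : ℂ} (hz : z ∈ U)
    (hfz : f z ≠ 0) :
    z * deriv P z = z ^ 2 * deriv (deriv f) z / f z - (z * deriv f z / f z) ^ 2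
      + z * deriv f z / f z := by
  have h1 := eqOn_deriv_mul_of_eqOn_mul_eq_mul_deriv hU hP hf hPf hz
  have h0 := hPf hz
  dsimp only at h1 h0
  field_simp
  linear_combination (z * f z) * h1 - (z * deriv f z) * h0

theorem sq_mul_deriv_deriv_eq_of_eqOn_mul_eq_mul_deriv {U : Set ℂ} (hU : IsOpen U) {P f : ℂ → ℂ}
    (hP : DifferentiableOn ℂ P U) (hf : DifferentiableOn ℂ f U)
    (hPf : EqOn (fun z => P z * f z) (fun z => z * deriv f z) U) {z : ℂ} (hz : z ∈ U)
    (hfz : f z ≠ 0) :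
    z ^ 2 * deriv (deriv P) z = z ^ 3 * deriv (deriv (deriv f)) z / f z
      + 2 * (z ^ 2 * deriv (deriv f) z / f z) + 2 * (z * deriv f z / f z) ^ 3
      - 2 * (z * deriv f z / f z) ^ 2
      - 3 * (z * deriv f z / f z) * (z ^ 2 * deriv (deriv f) z / f z) := by
  have h2 := eqOn_deriv_deriv_mul_of_eqOn_mul_eq_mul_deriv hU hP hf hPf hz
  have h1 := eqOn_deriv_mul_of_eqOn_mul_eq_mul_deriv hU hP hf hPf hz
  have h0 := hPf hz
  dsimp only at h2 h1 h0
  field_simp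
  linear_combination z ^ 2 * f z ^ 2 * h2 - 2 * z ^ 2 * f z * deriv f z * h1
    + (2 * z ^ 2 * deriv f z ^ 2 - z ^ 2 * f z * deriv (deriv f) z) * h0

theorem one_div_mul_add_one_div_mul_sq_lt {β₁ β₂ r : ℝ} (hβ₂ : 0 < β₂) (hcond : 2 * β₁ - β₂ ≥ 4)
    (hr0 : 0 ≤ r) (hr1 : r < 1) : 1 / β₁ * r + 1 / (β₁ + β₂) / 2 * r ^ 2 < 3 / 4 := by
  have hβ₁ : 0 < β₁ := by linarith
  have h1 : 1 / β₁ ≤ 2 / (4 + β₂) := by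
    rw [div_le_div_iff₀ hβ₁ (by linarith)]; linarith
  have h2 : 1 / (β₁ + β₂) / 2 ≤ 1 / (4 + 3 * β₂) := by
    rw [div_div, one_div_le_one_div (by positivity) (by positivity)]; linarith
  -- the difference is `(9 β₂² + 20 β₂) / (4 (4 + β₂) (4 + 3 β₂))`, so `3 / 4` is sharp at `β₂ = 0`
  have h3 : 2 / (4 + β₂) + 1 / (4 + 3 * β₂) ≤ 3 / 4 := by
    rw [div_add_div _ _ (by positivity) (by positivity),
      div_le_div_iff₀ (by positivity) (by norm_num)]
    nlinarith
  have hr2 : r ^ 2 ≤ r := by nlinarith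
  calc 1 / β₁ * r + 1 / (β₁ + β₂) / 2 * r ^ 2 ≤ (1 / β₁ + 1 / (β₁ + β₂) / 2) * r := by
        have : 0 ≤ 1 / (β₁ + β₂) / 2 := by positivity
        nlinarith
    _ ≤ 3 / 4 * r := by gcongr; linarith
    _ < 3 / 4 := by linarith

theorem stmt17_general (β₁ β₂ : ℝ) (hβ₂ : 0 < β₂)
    (hcond : 2 * β₁ - β₂ ≥ 4)
    (f : ℂ → ℂ) (hf : AnalyticOnNhd ℂ f (ball 0 1))
    (hf0 : f 0 = 0) (hf'0 : deriv f 0 = 1)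
    (hfne : ∀ z ∈ ball (0 : ℂ) 1, z ≠ 0 → f z ≠ 0)
    (S₁ S₂ S₃ Sf : ℂ → ℂ)
    (hS₁ : ∀ z, S₁ z = z * deriv f z / f z)
    (hS₂ : ∀ z, S₂ z = z ^ 2 * deriv (deriv f) z / f z)
    (hS₃ : ∀ z, S₃ z = z ^ 3 * deriv (deriv (deriv f)) z / f z)
    (hSf : ∀ z, Sf z = 1 + (β₁ : ℂ) * (S₂ z - S₁ z ^ 2 + S₁ z)
      + (β₂ : ℂ) * (S₃ z + 2 * S₂ z + 2 * S₁ z ^ 3 - 2 * S₁ z ^ 2 - 3 * S₁ z * S₂ z))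
    (hsub : ∀ z ∈ ball (0 : ℂ) 1, z ≠ 0 → ‖Sf z ^ 2 - 1‖ < 2 * ‖Sf z‖) :
    ∀ z ∈ ball (0 : ℂ) 1, z ≠ 0 → ∃ w ∈ ball (0 : ℂ) 1, z * deriv f z / f z = 1 + Complex.log (w + (1 + w ^ 2) ^ ((1 : ℂ) / 2)) := by
  have hβ₁ : 0 < β₁ := by linarith
  have hf' := hf.differentiableOn
  obtain ⟨P, hP, hP0, hPf⟩ := exists_differentiableOn_mul_eq_mul_deriv isOpen_ball
    (mem_ball_self one_pos) hf' hf0 (by simp [hf'0]) hfne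
  have hP' := hP.deriv isOpen_ball
  set G : ℂ → ℂ := fun z => 1 + β₁ * (z * deriv P z) + β₂ * (z ^ 2 * deriv (deriv P) z)
  have hGSf : ∀ z ∈ ball (0 : ℂ) 1, z ≠ 0 → G z = Sf z := fun z hz hz0 => by
    simp only [G]
    rw [hSf, hS₁, hS₂, hS₃, mul_deriv_eq_of_eqOn_mul_eq_mul_deriv isOpen_ball hP hf' hPf hz
      (hfne z hz hz0), sq_mul_deriv_deriv_eq_of_eqOn_mul_eq_mul_deriv isOpen_ball hP hf' hPf hz
      (hfne z hz hz0)]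
  have hG_lune : ∀ z ∈ ball (0 : ℂ) 1, ‖G z ^ 2 - 1‖ < 2 * ‖G z‖ := fun z hz => by
    rcases eq_or_ne z 0 with rfl | hz0
    · norm_num [G]
    · exact hGSf z hz hz0 ▸ hsub z hz hz0
  have hG : DifferentiableOn ℂ G (ball 0 1) :=
    (((differentiableOn_id.mul hP').const_mul _).const_add 1).add
      (((differentiableOn_id.pow 2).mul (hP'.deriv isOpen_ball)).const_mul _)
  have hG_sub : ∀ z ∈ ball (0 : ℂ) 1, ‖G z - 1‖ ≤ ‖z‖ + ‖z‖ ^ 2 := fun z hz =>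
    norm_sub_one_le_of_norm_sq_sub_one_lt hG (by simp [G]) hG_lune hz
  have hP'_le := norm_le_of_norm_mul_add_mul_deriv_le hβ₁ hβ₂ hP' fun z hz => by
    simpa only [G, add_assoc, add_sub_cancel_left] using hG_sub z hz
  intro z hz hz0
  have hPz : Real.sinh ‖P z - 1‖ < 1 := by
    have := norm_sub_le_of_norm_deriv_le hP hP'_le hz hz0
    rw [hP0] at this
    calc Real.sinh ‖P z - 1‖ < Real.sinh (3 / 4) := Real.sinh_lt_sinh.2 (this.trans_lt
          (one_div_mul_add_one_div_mul_sq_lt hβ₂ hcond (norm_nonneg z) (mem_ball_zero_iff.1 hz)))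
      _ < 1 := Real.sinh_three_quarters_lt_one
  obtain ⟨w, hw, hlog⟩ := exists_mem_ball_log_add_cpow_eq hPz
  refine ⟨w, hw, ?_⟩
  rw [hlog, ← eq_div_of_mul_eq (hfne z hz hz0) (hPf hz)]
  ring

theorem stmt17 (β₁ β₂ : ℝ) (hβ₁ : 0 < β₁) (hβ₂ : 0 < β₂)
    (hcond : 2 * β₁ - β₂ ≥ 4)
    (f : ℂ → ℂ) (hf : AnalyticOnNhd ℂ f (ball 0 1))
    (hf0 : f 0 = 0) (hf'0 : deriv f 0 = 1)
    (hfne : ∀ z ∈ ball (0 : ℂ) 1, z ≠ 0 → f z ≠ 0)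
    (S₁ S₂ S₃ Sf : ℂ → ℂ)
    (hS₁ : ∀ z, S₁ z = z * deriv f z / f z)
    (hS₂ : ∀ z, S₂ z = z ^ 2 * deriv (deriv f) z / f z)
    (hS₃ : ∀ z, S₃ z = z ^ 3 * deriv (deriv (deriv f)) z / f z)
    (hSf : ∀ z, Sf z = 1 + (β₁ : ℂ) * (S₂ z - S₁ z ^ 2 + S₁ z)
      + (β₂ : ℂ) * (S₃ z + 2 * S₂ z + 2 * S₁ z ^ 3 - 2 * S₁ z ^ 2 - 3 * S₁ z * S₂ z))
    (hsub : ∀ z ∈ ball (0 : ℂ) 1, z ≠ 0 → ‖Sf z ^ 2 - 1‖ < 2 * ‖Sf z‖) :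
    ∀ z ∈ ball (0 : ℂ) 1, z ≠ 0 → ∃ w ∈ ball (0 : ℂ) 1, z * deriv f z / f z = 1 + Complex.log (w + (1 + w ^ 2) ^ ((1 : ℂ) / 2)) :=
  stmt17_general β₁ β₂ hβ₂ hcond f hf hf0 hf'0 hfne S₁ S₂ S₃ Sf hS₁ hS₂ hS₃ hSf hsub
end

section
/- For every real θ, (−cos θ · sin(2 cos θ) + sin θ · sinh(2 sin θ)) / (cos(2 cos θ) + cosh(2 sin θ)) ≥ −sin 2/(1 + cos 2), with equality when θ = 0. (The denominator cos(2 cos θ) + cosh(2 sin θ) is strictly positive for all real θ.) Equivalently, the function n₂(θ) = Re(e^{iθ} tan(e^{iθ})), which equals Re(ζ q″(ζ)/q′(ζ)) for q(z) = 1 + sin z at ζ = e^{iθ}, attains its minimum value −sin 2/(1 + cos 2) = −tan 1 ≈ −1.55741 at θ = 0. -/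
open Real

lemma aux_self_mul_sinh (x : ℝ) : x ^ 2 ≤ x * Real.sinh x := by
  rcases le_or_gt 0 x with hx | hx
  · nlinarith [(Real.self_le_sinh_iff).2 hx]
  · have h : Real.sinh x ≤ x := by
      have := (Real.self_le_sinh_iff).2 (neg_nonneg.2 hx.le)
      rw [Real.sinh_neg] at this; linarith
    nlinarith

lemma aux_sinh_sq (x : ℝ) : x ^ 2 ≤ Real.sinh x ^ 2 := by
  rcases le_or_gt 0 x with hx | hx
  · nlinarith [(Real.self_le_sinh_iff).2 hx]
  · have h : Real.sinh x ≤ x := by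
      have := (Real.self_le_sinh_iff).2 (neg_nonneg.2 hx.le)
      rw [Real.sinh_neg] at this; linarith
    nlinarith

-- ψ(c) = sin1·cos²c − cos1·c·sin c·cos c + (sin1+cos1)(1−c²) ≥ 0 for |c| ≤ 1
lemma aux_psi (c : ℝ) (h0 : 0 ≤ c) (h1 : c ≤ 1) :
    0 ≤ Real.sin 1 * Real.cos c ^ 2 - Real.cos 1 * (c * Real.sin c) * Real.cos c
        + (Real.sin 1 + Real.cos 1) * (1 - c ^ 2) := by
  have hid : Real.sin 1 * Real.cos c ^ 2 - Real.cos 1 * (c * Real.sin c) * Real.cos c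
        + (Real.sin 1 + Real.cos 1) * (1 - c ^ 2)
      = Real.cos c * Real.sin (1 - c) + (1 - c) * Real.cos 1 * Real.sin c * Real.cos c
        + (Real.sin 1 + Real.cos 1) * ((1 - c) * (1 + c)) := by
    rw [Real.sin_sub]; ring
  rw [hid]
  have hpi : (2:ℝ) ≤ Real.pi := Real.two_le_pi
  have hcos : 0 ≤ Real.cos c :=
    Real.cos_nonneg_of_mem_Icc ⟨by linarith [Real.pi_gt_three], by linarith [Real.pi_gt_three]⟩
  have hsin : 0 ≤ Real.sin c := Real.sin_nonneg_of_nonneg_of_le_pi h0 (by linarith)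
  have hs1c : 0 ≤ Real.sin (1 - c) :=
    Real.sin_nonneg_of_nonneg_of_le_pi (by linarith) (by linarith)
  have hc1 := Real.cos_one_pos
  have hs1 := Real.sin_pos_of_pos_of_lt_pi (x := 1) one_pos (by linarith)
  have t1 : 0 ≤ Real.cos c * Real.sin (1 - c) := mul_nonneg hcos hs1c
  have t2 : 0 ≤ (1 - c) * Real.cos 1 * Real.sin c * Real.cos c :=
    mul_nonneg (mul_nonneg (mul_nonneg (by linarith) hc1.le) hsin) hcos
  have t3 : 0 ≤ (Real.sin 1 + Real.cos 1) * ((1 - c) * (1 + c)) := by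
    apply mul_nonneg <;> nlinarith
  linarith

lemma aux_key (θ : ℝ) :
    0 ≤ Real.cos 1 * (-Real.cos θ * Real.sin (2 * Real.cos θ)
          + Real.sin θ * Real.sinh (2 * Real.sin θ))
      + Real.sin 1 * (Real.cos (2 * Real.cos θ) + Real.cosh (2 * Real.sin θ)) := by
  set c := Real.cos θ with hc
  set s := Real.sin θ with hs
  have hpyth : s ^ 2 + c ^ 2 = 1 := Real.sin_sq_add_cos_sq θ
  have hsinh : 2 * s ^ 2 ≤ s * Real.sinh (2 * s) := by
    have := aux_self_mul_sinh (2 * s); nlinarith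
  have hcosh : 1 + 2 * s ^ 2 ≤ Real.cosh (2 * s) := by
    have h1 := Real.cosh_two_mul s
    have h2 := Real.cosh_sq s
    have h3 := aux_sinh_sq s
    nlinarith
  have hsin2c : Real.sin (2 * c) = 2 * Real.sin c * Real.cos c := Real.sin_two_mul c
  have hcos2c : Real.cos (2 * c) = 2 * Real.cos c ^ 2 - 1 := Real.cos_two_mul c
  have hpsi : 0 ≤ Real.sin 1 * Real.cos c ^ 2 - Real.cos 1 * (c * Real.sin c) * Real.cos c
        + (Real.sin 1 + Real.cos 1) * (1 - c ^ 2) := by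
    rcases le_or_gt 0 c with h0 | h0
    · exact aux_psi c h0 (Real.cos_le_one θ)
    · have := aux_psi (-c) (by linarith) (by have := Real.neg_one_le_cos θ; linarith)
      rw [Real.cos_neg, Real.sin_neg] at this; nlinarith [this]
  have hc1 := Real.cos_one_pos
  have hs1 : 0 < Real.sin 1 := Real.sin_pos_of_pos_of_lt_pi one_pos
    (by linarith [Real.pi_gt_three])
  rw [hsin2c, hcos2c]
  nlinarith [hpsi, mul_le_mul_of_nonneg_left hsinh hc1.le,
    mul_le_mul_of_nonneg_left hcosh hs1.le, hpyth]

theorem stmt19 :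
    (∀ θ : ℝ,
      0 < Real.cos (2 * Real.cos θ) + Real.cosh (2 * Real.sin θ) ∧
      (-Real.cos θ * Real.sin (2 * Real.cos θ) + Real.sin θ * Real.sinh (2 * Real.sin θ)) /
          (Real.cos (2 * Real.cos θ) + Real.cosh (2 * Real.sin θ)) ≥
        -Real.sin 2 / (1 + Real.cos 2)) ∧
    (-Real.cos 0 * Real.sin (2 * Real.cos 0) + Real.sin 0 * Real.sinh (2 * Real.sin 0)) /
        (Real.cos (2 * Real.cos 0) + Real.cosh (2 * Real.sin 0)) =
      -Real.sin 2 / (1 + Real.cos 2) := by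
  have hc1 := Real.cos_one_pos
  have hcos2 : Real.cos 2 = 2 * Real.cos 1 ^ 2 - 1 := by
    have := Real.cos_two_mul 1; norm_num at this; exact this
  have hsin2 : Real.sin 2 = 2 * Real.sin 1 * Real.cos 1 := by
    have := Real.sin_two_mul 1; norm_num at this; exact this
  have hden2 : 0 < 1 + Real.cos 2 := by rw [hcos2]; nlinarith
  constructor
  · intro θ
    have hDpos : 0 < Real.cos (2 * Real.cos θ) + Real.cosh (2 * Real.sin θ) := by
      have h1 : Real.cos 2 ≤ Real.cos (2 * Real.cos θ) := by
        have : Real.cos (2 * Real.cos θ) = Real.cos (|2 * Real.cos θ|) := by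
          rcases abs_cases (2 * Real.cos θ) with ⟨h, _⟩ | ⟨h, _⟩
          · rw [h]
          · rw [h, Real.cos_neg]
        rw [this]
        apply Real.cos_le_cos_of_nonneg_of_le_pi (abs_nonneg _) Real.two_le_pi
        rw [abs_mul]
        have := Real.abs_cos_le_one θ
        rw [abs_of_nonneg (by norm_num : (0:ℝ) ≤ 2)]
        linarith
      have h2 := Real.one_le_cosh (2 * Real.sin θ)
      linarith
    refine ⟨hDpos, ?_⟩
    rw [ge_iff_le, div_le_div_iff₀ hden2 hDpos]
    have hkey := aux_key θ
    rw [hsin2, hcos2]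
    nlinarith [mul_nonneg hc1.le hkey]
  · rw [Real.sin_zero, Real.cos_zero]
    norm_num [Real.cosh_zero]
    rw [add_comm]
end
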